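/- Let φ(u) = exp(-u²/2)/√(2π) be the standard normal density and Φ the standard normal cdf. Fix z < 0. Then the limit as ν → 0⁺ of R(z,ν) = (e^{zν}·Φ(z+ν) − e^{−zν}·Φ(z−ν)) / (e^{−zν} − e^{zν}) equals −φ(z)/z − Φ(z). -/

import Mathlib

open MeasureTheory Real

/-- The standard normal density φ(u) = exp(-u²/2)/√(2π). -/
noncomputable def stdNormalPdf (u : ℝ) : ℝ := Real.exp (-u ^ 2 / 2) / Real.sqrt (2 * Real.pi)

/-- The standard normal cdf Φ(z) = ∫_{-∞}^z φ(u) du. -/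
noncomputable def stdNormalCdf (z : ℝ) : ℝ := ∫ u in Set.Iic z, stdNormalPdf u

/-!
Numerator and denominator of `R(z, ν)` both vanish at `ν = 0` and are differentiable there, with
derivatives `2 (z Φ(z) + φ(z))` (since `Φ' = φ`) and `-2z ≠ 0`. Dividing both by `ν`, the
quotient is a ratio of difference quotients, so it tends to the ratio of the derivatives,
`-φ(z)/z - Φ(z)`.
-/

open Filter Topology

theorem tendsto_div_of_hasDerivAt_of_eq_zero {𝕜 : Type*} [NontriviallyNormedField 𝕜]
    {f g : 𝕜 → 𝕜} {a f' g' : 𝕜} (hf : HasDerivAt f f' a) (hg : HasDerivAt g g' a)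
    (hfa : f a = 0) (hga : g a = 0) (hg' : g' ≠ 0) :
    Tendsto (fun x => f x / g x) (𝓝[≠] a) (𝓝 (f' / g')) := by
  refine ((hasDerivAt_iff_tendsto_slope.mp hf).div (hasDerivAt_iff_tendsto_slope.mp hg)
    hg').congr' ?_
  filter_upwards [self_mem_nhdsWithin] with x hx
  rw [Pi.div_apply, slope_def_field, slope_def_field, hfa, hga, sub_zero, sub_zero,
    div_div_div_cancel_right₀ (sub_ne_zero.mpr hx)]

theorem hasDerivAt_exp_const_mul_zero (c : ℝ) : HasDerivAt (fun ν => exp (c * ν)) c 0 := by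
  simpa using ((hasDerivAt_id (0 : ℝ)).const_mul c).exp

theorem hasDerivAt_exp_mul_comp_add_sub_exp_neg_mul_comp_sub {F : ℝ → ℝ} {z F' : ℝ}
    (hF : HasDerivAt F F' z) :
    HasDerivAt (fun ν => exp (z * ν) * F (z + ν) - exp (-z * ν) * F (z - ν))
      (2 * (z * F z + F')) 0 := by
  have hplus : HasDerivAt (fun ν => F (z + ν)) F' 0 := by
    simpa using HasDerivAt.comp_const_add z 0 (by simpa using hF)
  have hminus : HasDerivAt (fun ν => F (z - ν)) (-F') 0 := by
    simpa using HasDerivAt.comp_const_sub z 0 (by simpa using hF)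
  refine (((hasDerivAt_exp_const_mul_zero z).mul hplus).sub
    ((hasDerivAt_exp_const_mul_zero (-z)).mul hminus)).congr_deriv ?_
  simp only [mul_zero, exp_zero, add_zero, sub_zero]
  ring

theorem stdNormalPdf_continuous : Continuous stdNormalPdf := by
  unfold stdNormalPdf
  fun_prop

theorem stdNormalPdf_integrable : Integrable stdNormalPdf := by
  refine ((integrable_exp_neg_mul_sq (b := 1 / 2) (by norm_num)).div_const
    (sqrt (2 * π))).congr (.of_forall fun u => ?_)
  simp only [stdNormalPdf]
  ring_nf

theorem stdNormalCdf_hasDerivAt (x : ℝ) : HasDerivAt stdNormalCdf (stdNormalPdf x) x := by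
  have hcdf : stdNormalCdf = fun y => stdNormalCdf 0 + ∫ t in (0 : ℝ)..y, stdNormalPdf t := by
    ext y
    rw [← intervalIntegral.integral_Iic_sub_Iic stdNormalPdf_integrable.integrableOn
      stdNormalPdf_integrable.integrableOn, stdNormalCdf, stdNormalCdf]
    ring
  rw [hcdf]
  exact (intervalIntegral.integral_hasDerivAt_right stdNormalPdf_integrable.intervalIntegrable
    (stdNormalPdf_continuous.stronglyMeasurableAtFilter _ _)
    stdNormalPdf_continuous.continuousAt).const_add _

/-- For fixed z < 0, R(z,ν) → −φ(z)/z − Φ(z) as ν → 0⁺. -/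
theorem strangle_relative_value_tendsto_bound (z : ℝ) (hz : z < 0) :
    Filter.Tendsto
      (fun ν : ℝ =>
        (Real.exp (z * ν) * stdNormalCdf (z + ν) - Real.exp (-z * ν) * stdNormalCdf (z - ν)) /
          (Real.exp (-z * ν) - Real.exp (z * ν)))
      (nhdsWithin 0 (Set.Ioi 0))
      (nhds (-stdNormalPdf z / z - stdNormalCdf z)) := by
  have hnum := hasDerivAt_exp_mul_comp_add_sub_exp_neg_mul_comp_sub (stdNormalCdf_hasDerivAt z)
  have hden : HasDerivAt (fun ν => exp (-z * ν) - exp (z * ν)) (-(2 * z)) 0 :=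
    ((hasDerivAt_exp_const_mul_zero (-z)).sub (hasDerivAt_exp_const_mul_zero z)).congr_deriv
      (by ring)
  have hlim := tendsto_div_of_hasDerivAt_of_eq_zero hnum hden (by simp) (by simp)
    (by simpa using hz.ne)
  convert hlim.mono_left (nhdsGT_le_nhdsNE 0) using 2
  field_simp [hz.ne]
  ring
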